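/- arXiv:0811.1330 — 2 statements merged into one kernel-verified Lean document; each statement's English description precedes it below -/
import Mathlib

section
/- Let E be the exterior algebra over ℚ on z₁,…,z_m (degree 1). In E ⊗ E with the graded tensor product multiplication, the product ∏_{i=1}^m (1⊗z_i − z_i⊗1) is nonzero; consequently the zero-divisor cup length of E (the nilpotency length of the kernel of the multiplication map E ⊗ E → E) is at least m. -/
/-!
Apply `ε ⊗ id : E ⊗ E → E`, where `ε : E → ℚ` is the augmentation. Since `ε` kills everything
of positive degree, this is an algebra map for the graded tensor product, and it sends
`1 ⊗ zᵢ − zᵢ ⊗ 1` to `zᵢ`. Hence `∏ᵢ (1 ⊗ zᵢ − zᵢ ⊗ 1)` maps to `z₁ ⋯ z_m`, which is nonzero because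
the determinant, viewed as an alternating form, takes the value `1` on it. Each factor lies in
`ker μ`, so the product is a nonzero element of `(ker μ)^m`.
-/

open TensorProduct

theorem Submodule.list_prod_mem_pow {R A : Type*} [CommSemiring R] [Semiring A] [Algebra R A]
    (p : Submodule R A) {l : List A} (hl : ∀ x ∈ l, x ∈ p) : l.prod ∈ p ^ l.length := by
  induction l with
  | nil => exact Submodule.one_le.mp le_rfl
  | cons x l ih =>
    rw [List.prod_cons, List.length_cons, pow_succ']
    exact Submodule.mul_mem_mul (hl x List.mem_cons_self)
      (ih fun y hy => hl y (List.mem_cons_of_mem x hy))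

namespace ExteriorAlgebra

variable {R M : Type*} [CommRing R] [AddCommGroup M] [Module R M]

theorem algebraMapInv_ι (v : M) : algebraMapInv (ι R v) = 0 := by
  rw [algebraMapInv, lift_ι_apply, LinearMap.zero_apply]

theorem algebraMapInv_eq_zero_of_mem_pow_succ {k : ℕ} {a : ExteriorAlgebra R M}
    (ha : a ∈ LinearMap.range (ι R : M →ₗ[R] ExteriorAlgebra R M) ^ (k + 1)) :
    algebraMapInv a = 0 := by
  rw [pow_succ] at ha
  refine Submodule.mul_induction_on ha (fun x _ y hy => ?_) fun x y hx hy => ?_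
  · obtain ⟨v, rfl⟩ := hy
    rw [map_mul, algebraMapInv_ι, mul_zero]
  · rw [map_add, hx, hy, add_zero]

theorem ιMulti_pi_single_ne_zero [Nontrivial R] (n : ℕ) :
    ιMulti R n (fun i : Fin n => (Pi.single i 1 : Fin n → R)) ≠ 0 := by
  intro h
  have hdet := congr_arg
    (liftAlternating (Pi.single n (Matrix.detRowAlternating : (Fin n → R) [⋀^Fin n]→ₗ[R] R))) h
  rw [liftAlternating_apply_ιMulti, Pi.single_eq_same, map_zero] at hdet
  have hone : (fun i : Fin n => (Pi.single i 1 : Fin n → R)) = Matrix.of.symm 1 := by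
    ext i j
    simp [Matrix.one_apply, Pi.single_apply, eq_comm]
  rw [hone] at hdet
  exact one_ne_zero (Matrix.det_one.symm.trans hdet)

local notation "𝓔" => fun i : ℕ => ⋀[R]^i M

local notation:100 a " ⊗ₑ " b:100 => GradedTensorProduct.tmul (𝒜 := 𝓔) (ℬ := 𝓔) R a b

variable (R M) in
noncomputable def augmentationTensorId : (𝓔 ᵍ⊗[R] 𝓔) →ₐ[R] ExteriorAlgebra R M :=
  GradedTensorProduct.lift _ _ ((Algebra.ofId R _).comp algebraMapInv) (AlgHom.id R _)
    fun i j a b => by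
      cases i with
      | zero =>
        rw [Nat.mul_zero, pow_zero, one_smul, AlgHom.comp_apply, Algebra.ofId_apply]
        exact Algebra.commutes _ _
      | succ k =>
        rw [AlgHom.comp_apply, algebraMapInv_eq_zero_of_mem_pow_succ a.2, map_zero, zero_mul,
          mul_zero, smul_zero]

theorem augmentationTensorId_tmul (a b : ExteriorAlgebra R M) :
    augmentationTensorId R M (a ⊗ₑ b) = algebraMap R _ (algebraMapInv a) * b :=
  GradedTensorProduct.lift_tmul _ _ _ _ _ a b

theorem augmentationTensorId_sub_ι (v : M) :
    augmentationTensorId R M ((1 ⊗ₑ ι R v) - (ι R v ⊗ₑ 1)) = ι R v := by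
  rw [map_sub, augmentationTensorId_tmul, augmentationTensorId_tmul, map_one, map_one, one_mul,
    algebraMapInv_ι, map_zero, zero_mul, sub_zero]

theorem augmentationTensorId_list_prod {κ : Type*} (l : List κ) (v : κ → M) :
    augmentationTensorId R M ((l.map fun i => (1 ⊗ₑ ι R (v i)) - (ι R (v i) ⊗ₑ 1)).prod) =
      (l.map fun i => ι R (v i)).prod := by
  simp only [map_list_prod, List.map_map, Function.comp_def, augmentationTensorId_sub_ι]

theorem list_prod_sub_tmul_ne_zero {n : ℕ} {v : Fin n → M} (hv : ιMulti R n v ≠ 0) :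
    ((List.finRange n).map fun i => (1 ⊗ₑ ι R (v i)) - (ι R (v i) ⊗ₑ 1)).prod ≠ 0 := by
  intro h
  apply hv
  rw [ιMulti_apply, List.ofFn_eq_map, ← augmentationTensorId_list_prod, h, map_zero]

theorem list_prod_sub_tmul_mem_ker_pow (μ : (𝓔 ᵍ⊗[R] 𝓔) →ₐ[R] ExteriorAlgebra R M)
    (hμ : ∀ a b, μ (a ⊗ₑ b) = a * b) {κ : Type*} (l : List κ) (v : κ → M) :
    (l.map fun i => (1 ⊗ₑ ι R (v i)) - (ι R (v i) ⊗ₑ 1)).prod ∈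
      LinearMap.ker μ.toLinearMap ^ l.length := by
  simpa using Submodule.list_prod_mem_pow (LinearMap.ker μ.toLinearMap) (l := l.map _) <| by
    simp only [List.mem_map]
    rintro _ ⟨i, _, rfl⟩
    rw [LinearMap.mem_ker, AlgHom.toLinearMap_apply, map_sub, hμ, hμ, one_mul, mul_one, sub_self]

end ExteriorAlgebra

/-- Let `E` be the exterior algebra over `ℚ` on `z₁,…,z_m` (degree 1).  In the graded tensor
product `E ⊗ E`, the product `∏ᵢ (1⊗z_i − z_i⊗1)` is nonzero; consequently the zero-divisor
cup length of `E` — the nilpotency length of the kernel `Z` of the multiplication map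
`μ : E ⊗ E → E` (`μ(a⊗b) = ab`) — is at least `m`, i.e. `Z^m ≠ ⊥`. -/
theorem exterior_zcl_ge (m : ℕ)
    (z : Fin m → ExteriorAlgebra ℚ (Fin m → ℚ))
    (hz : ∀ i, z i = ExteriorAlgebra.ι ℚ (Pi.single i 1))
    (μ : ((fun i : ℕ => ⋀[ℚ]^i (Fin m → ℚ)) ᵍ⊗[ℚ] (fun i : ℕ => ⋀[ℚ]^i (Fin m → ℚ))) →ₐ[ℚ]
      ExteriorAlgebra ℚ (Fin m → ℚ))
    (hμ : ∀ a b : ExteriorAlgebra ℚ (Fin m → ℚ),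
      μ (GradedTensorProduct.tmul (𝒜 := fun i : ℕ => ⋀[ℚ]^i (Fin m → ℚ))
        (ℬ := fun i : ℕ => ⋀[ℚ]^i (Fin m → ℚ)) ℚ a b) = a * b) :
    ((List.finRange m).map (fun i =>
        GradedTensorProduct.tmul (𝒜 := fun i : ℕ => ⋀[ℚ]^i (Fin m → ℚ))
          (ℬ := fun i : ℕ => ⋀[ℚ]^i (Fin m → ℚ)) ℚ (1 : ExteriorAlgebra ℚ (Fin m → ℚ)) (z i) -
        GradedTensorProduct.tmul (𝒜 := fun i : ℕ => ⋀[ℚ]^i (Fin m → ℚ))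
          (ℬ := fun i : ℕ => ⋀[ℚ]^i (Fin m → ℚ)) ℚ (z i)
          (1 : ExteriorAlgebra ℚ (Fin m → ℚ)))).prod ≠ 0 ∧
      (LinearMap.ker μ.toLinearMap) ^ m ≠ ⊥ := by
  obtain rfl := funext hz
  have hne := ExteriorAlgebra.list_prod_sub_tmul_ne_zero
    (ExteriorAlgebra.ιMulti_pi_single_ne_zero (R := ℚ) m)
  refine ⟨hne, fun hbot => hne ?_⟩
  simpa [hbot] using
    ExteriorAlgebra.list_prod_sub_tmul_mem_ker_pow μ hμ (List.finRange m) fun i => Pi.single i 1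
end

section
/- Let A and B be graded ℚ-algebras with zero-divisor cup lengths zcl(A) and zcl(B) (the cup length of the kernel of the multiplication map A⊗A → A, resp. B⊗B → B). Then zcl(A ⊗ B) ≥ zcl(A) + zcl(B). -/
/-!
The inclusions `A → A ⊗ B ← B` induce algebra maps `A ⊗ A → (A ⊗ B) ⊗ (A ⊗ B) ← B ⊗ B`
which commute with the multiplication maps, hence carry zero divisors to zero divisors.
The product of the image of `x ∈ A ⊗ A` with the image of `y ∈ B ⊗ B` is `x ⊗ y` up to the
signed interchange `(A ⊗ A) ⊗ (B ⊗ B) ≃ (A ⊗ B) ⊗ (A ⊗ B)`, so over a field it is nonzero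
when `x` and `y` are. Applying this to the products of `p` zero divisors of `A` and `q` zero divisors of `B`
gives `p + q` zero divisors of `A ⊗ B` with nonzero product.
-/

open TensorProduct

theorem TensorProduct.tmul_ne_zero {R M N : Type*} [CommRing R] [IsDomain R]
    [AddCommGroup M] [AddCommGroup N] [Module R M] [Module R N]
    [Module.Projective R M] [Module.Projective R N] {x : M} {y : N} (hx : x ≠ 0) (hy : y ≠ 0) :
    x ⊗ₜ[R] y ≠ 0 := by
  obtain ⟨φ, hφ⟩ := Module.Projective.exists_dual_ne_zero R hx
  obtain ⟨ψ, hψ⟩ := Module.Projective.exists_dual_ne_zero R hy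
  intro h
  have := congr_arg (lift ((LinearMap.mul R R).compl₁₂ φ ψ)) h
  simp only [lift.tmul, LinearMap.compl₁₂_apply, LinearMap.mul_apply', map_zero] at this
  exact mul_ne_zero hφ hψ this

namespace GradedTensorProduct

variable {R ι A B : Type*} [CommSemiring ι] [DecidableEq ι] [Module ι (Additive ℤˣ)]
  [CommRing R] [Ring A] [Ring B] [Algebra R A] [Algebra R B]
  {𝒜 : ι → Submodule R A} {ℬ : ι → Submodule R B} [GradedAlgebra 𝒜] [GradedAlgebra ℬ]

section Map

variable {C D : Type*} [Ring C] [Ring D] [Algebra R C] [Algebra R D]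
  {𝒞 : ι → Submodule R C} {𝒟 : ι → Submodule R D} [GradedAlgebra 𝒞] [GradedAlgebra 𝒟]

noncomputable def map (f : A →ₐ[R] C) (g : B →ₐ[R] D) (hf : ∀ i, ∀ a ∈ 𝒜 i, f a ∈ 𝒞 i)
    (hg : ∀ i, ∀ b ∈ ℬ i, g b ∈ 𝒟 i) : (𝒜 ᵍ⊗[R] ℬ) →ₐ[R] (𝒞 ᵍ⊗[R] 𝒟) :=
  lift 𝒜 ℬ ((includeLeft 𝒞 𝒟).comp f) ((includeRight 𝒞 𝒟).comp g) fun i j a b => by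
    simp only [AlgHom.comp_apply, includeLeft_apply, includeRight_apply]
    rw [tmul_one_mul_one_tmul,
      tmul_coe_mul_coe_tmul 𝒞 𝒟 1 ⟨g b, hg j b b.2⟩ ⟨f a, hf i a a.2⟩ 1, one_mul, mul_one,
      smul_smul, Int.units_mul_self, one_smul]

@[simp]
theorem map_tmul (f : A →ₐ[R] C) (g : B →ₐ[R] D) (hf : ∀ i, ∀ a ∈ 𝒜 i, f a ∈ 𝒞 i)
    (hg : ∀ i, ∀ b ∈ ℬ i, g b ∈ 𝒟 i) (a : A) (b : B) :
    map f g hf hg (a ᵍ⊗ₜ b) = f a ᵍ⊗ₜ g b := by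
  simp only [map, lift_tmul, AlgHom.comp_apply, includeLeft_apply, includeRight_apply,
    tmul_one_mul_one_tmul]

theorem comp_map_of_tmul_eq_mul (f : A →ₐ[R] C) (hf : ∀ i, ∀ a ∈ 𝒜 i, f a ∈ 𝒞 i)
    (μ : (𝒜 ᵍ⊗[R] 𝒜) →ₐ[R] A) (hμ : ∀ a a' : A, μ (a ᵍ⊗ₜ a') = a * a')
    (ν : (𝒞 ᵍ⊗[R] 𝒞) →ₐ[R] C) (hν : ∀ c c' : C, ν (c ᵍ⊗ₜ c') = c * c') :
    ν.comp (map f f hf hf) = f.comp μ := by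
  ext a <;> simp [hμ, hν]

end Map

variable (𝒜 ℬ) in
noncomputable def tensorTensorTensorComm (M N : Type*) [AddCommGroup M] [Module R M]
    [AddCommGroup N] [Module R N] :
    (M ⊗[R] A) ⊗[R] (B ⊗[R] N) ≃ₗ[R] (M ⊗[R] B) ⊗[R] (A ⊗[R] N) :=
  TensorProduct.assoc R M A (B ⊗[R] N) ≪≫ₗ
    TensorProduct.congr (LinearEquiv.refl R M)
      ((TensorProduct.assoc R A B N).symm ≪≫ₗ
        TensorProduct.congr (of R 𝒜 ℬ ≪≫ₗ (comm 𝒜 ℬ).toLinearEquiv ≪≫ₗ (of R ℬ 𝒜).symm)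
          (LinearEquiv.refl R N) ≪≫ₗ
        TensorProduct.assoc R B A N) ≪≫ₗ
    (TensorProduct.assoc R M B (A ⊗[R] N)).symm

theorem tensorTensorTensorComm_tmul {M N : Type*} [AddCommGroup M] [Module R M]
    [AddCommGroup N] [Module R N] (m : M) {i j : ι} (a : 𝒜 i) (b : ℬ j) (n : N) :
    tensorTensorTensorComm 𝒜 ℬ M N ((m ⊗ₜ (a : A)) ⊗ₜ ((b : B) ⊗ₜ n)) =
      (-1 : ℤˣ) ^ (j * i) • ((m ⊗ₜ (b : B)) ⊗ₜ ((a : A) ⊗ₜ n)) := by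
  simp only [tensorTensorTensorComm, LinearEquiv.trans_apply, TensorProduct.assoc_tmul,
    TensorProduct.assoc_symm_tmul, TensorProduct.congr_tmul, LinearEquiv.refl_apply,
    AlgEquiv.toLinearEquiv_apply, comm_coe_tmul_coe, Units.smul_def, ← Int.cast_smul_eq_zsmul R,
    TensorProduct.smul_tmul', map_smul, TensorProduct.tmul_smul, of_symm_of]

section TensorSquare

variable {𝒞 : ι → Submodule R (𝒜 ᵍ⊗[R] ℬ)}

theorem includeLeft_mem
    (h𝒞 : ∀ (i j : ι) (a : A) (b : B), a ∈ 𝒜 i → b ∈ ℬ j → a ᵍ⊗ₜ[R] b ∈ 𝒞 (i + j)) :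
    ∀ i, ∀ a ∈ 𝒜 i, includeLeft 𝒜 ℬ a ∈ 𝒞 i := fun i a ha => by
  simpa using h𝒞 i 0 a 1 ha (SetLike.one_mem_graded ℬ)

theorem includeRight_mem
    (h𝒞 : ∀ (i j : ι) (a : A) (b : B), a ∈ 𝒜 i → b ∈ ℬ j → a ᵍ⊗ₜ[R] b ∈ 𝒞 (i + j)) :
    ∀ j, ∀ b ∈ ℬ j, includeRight 𝒜 ℬ b ∈ 𝒞 j := fun j b hb => by
  simpa using h𝒞 0 j 1 b (SetLike.one_mem_graded 𝒜) hb

theorem map_includeLeft_tmul_mul_map_includeRight_tmul [GradedAlgebra 𝒞]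
    (h𝒞 : ∀ (i j : ι) (a : A) (b : B), a ∈ 𝒜 i → b ∈ ℬ j → a ᵍ⊗ₜ[R] b ∈ 𝒞 (i + j))
    (a : A) {i j : ι} (α : 𝒜 i) (β : ℬ j) (b : B) :
    map _ _ (includeLeft_mem h𝒞) (includeLeft_mem h𝒞) (a ᵍ⊗ₜ[R] (α : A)) *
        map _ _ (includeRight_mem h𝒞) (includeRight_mem h𝒞) ((β : B) ᵍ⊗ₜ[R] b) =
      of R 𝒞 𝒞 (TensorProduct.congr (of R 𝒜 ℬ) (of R 𝒜 ℬ)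
        (tensorTensorTensorComm 𝒜 ℬ A B ((a ⊗ₜ (α : A)) ⊗ₜ ((β : B) ⊗ₜ b)))) := by
  -- Both sides carry the Koszul sign `(-1) ^ (i * j)` of moving `β` past `α`.
  have h := tmul_coe_mul_coe_tmul 𝒞 𝒞 (includeLeft 𝒜 ℬ a) ⟨_, includeLeft_mem h𝒞 i α α.2⟩
    ⟨_, includeRight_mem h𝒞 j β β.2⟩ (includeRight 𝒜 ℬ b)
  rw [map_tmul, map_tmul, h, tensorTensorTensorComm_tmul, mul_comm j i]
  simp only [includeLeft_apply, includeRight_apply, tmul_one_mul_one_tmul, Units.smul_def,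
    ← Int.cast_smul_eq_zsmul R, map_smul, TensorProduct.congr_tmul]

theorem map_includeLeft_mul_map_includeRight [GradedAlgebra 𝒞]
    (h𝒞 : ∀ (i j : ι) (a : A) (b : B), a ∈ 𝒜 i → b ∈ ℬ j → a ᵍ⊗ₜ[R] b ∈ 𝒞 (i + j))
    (x : 𝒜 ᵍ⊗[R] 𝒜) (y : ℬ ᵍ⊗[R] ℬ) :
    map _ _ (includeLeft_mem h𝒞) (includeLeft_mem h𝒞) x *
        map _ _ (includeRight_mem h𝒞) (includeRight_mem h𝒞) y =
      of R 𝒞 𝒞 (TensorProduct.congr (of R 𝒜 ℬ) (of R 𝒜 ℬ)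
        (tensorTensorTensorComm 𝒜 ℬ A B ((of R 𝒜 𝒜).symm x ⊗ₜ (of R ℬ ℬ).symm y))) := by
  suffices H : (LinearMap.mul R (𝒞 ᵍ⊗[R] 𝒞)).compl₁₂
      (map _ _ (includeLeft_mem h𝒞) (includeLeft_mem h𝒞)).toLinearMap
      (map _ _ (includeRight_mem h𝒞) (includeRight_mem h𝒞)).toLinearMap =
      ((TensorProduct.mk R _ _).compl₁₂ (of R 𝒜 𝒜).symm.toLinearMap
        (of R ℬ ℬ).symm.toLinearMap).compr₂ ((of R 𝒞 𝒞).toLinearMap ∘ₗ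
          (TensorProduct.congr (of R 𝒜 ℬ) (of R 𝒜 ℬ)).toLinearMap ∘ₗ
          (tensorTensorTensorComm 𝒜 ℬ A B).toLinearMap) from
    LinearMap.congr_fun₂ H x y
  -- Both sides are bilinear, so it suffices to compare them on `a ⊗ α` and `β ⊗ b`
  -- with `α` and `β` homogeneous.
  ext a : 3
  refine DirectSum.decompose_lhom_ext 𝒜 fun i => ?_
  ext α : 1
  ext : 2
  refine DirectSum.decompose_lhom_ext ℬ fun j => ?_
  ext β b
  exact map_includeLeft_tmul_mul_map_includeRight_tmul h𝒞 a α β b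

end TensorSquare

end GradedTensorProduct

theorem List.prod_map_finRange_append {M : Type*} [Monoid M] {p q : ℕ} (u : Fin p → M)
    (v : Fin q → M) :
    ((List.finRange (p + q)).map (Fin.append u v)).prod =
      ((List.finRange p).map u).prod * ((List.finRange q).map v).prod := by
  simp only [← List.ofFn_eq_map, List.ofFn_fin_append, List.prod_append]

open GradedTensorProduct

/-- Superadditivity of the zero-divisor cup length under (graded) tensor products:
if `zcl(A) ≥ p` and `zcl(B) ≥ q` (witnessed by zero divisors — elements of the kernel of
the multiplication map `μ_A : A ⊗ A → A`, resp. `μ_B` — with nonzero product), then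
`zcl(A ⊗ B) ≥ p + q`.  Here `A ⊗ B` carries a grading `𝒞` compatible with those of `A` and
`B`, and all tensor products are graded tensor products. -/
theorem zcl_tensor_superadditive {A B : Type} [Ring A] [Ring B] [Algebra ℚ A] [Algebra ℚ B]
    (𝒜 : ℕ → Submodule ℚ A) (ℬ : ℕ → Submodule ℚ B) [GradedAlgebra 𝒜] [GradedAlgebra ℬ]
    (𝒞 : ℕ → Submodule ℚ (𝒜 ᵍ⊗[ℚ] ℬ)) [GradedAlgebra 𝒞]
    (h𝒞 : ∀ (i j : ℕ) (a : A) (b : B), a ∈ 𝒜 i → b ∈ ℬ j →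
      GradedTensorProduct.tmul (𝒜 := 𝒜) (ℬ := ℬ) ℚ a b ∈ 𝒞 (i + j))
    (μA : (𝒜 ᵍ⊗[ℚ] 𝒜) →ₐ[ℚ] A)
    (hμA : ∀ a a' : A, μA (GradedTensorProduct.tmul (𝒜 := 𝒜) (ℬ := 𝒜) ℚ a a') = a * a')
    (μB : (ℬ ᵍ⊗[ℚ] ℬ) →ₐ[ℚ] B)
    (hμB : ∀ b b' : B, μB (GradedTensorProduct.tmul (𝒜 := ℬ) (ℬ := ℬ) ℚ b b') = b * b')
    (μC : (𝒞 ᵍ⊗[ℚ] 𝒞) →ₐ[ℚ] (𝒜 ᵍ⊗[ℚ] ℬ))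
    (hμC : ∀ c c' : 𝒜 ᵍ⊗[ℚ] ℬ,
      μC (GradedTensorProduct.tmul (𝒜 := 𝒞) (ℬ := 𝒞) ℚ c c') = c * c')
    (p q : ℕ)
    (hA : ∃ a : Fin p → (𝒜 ᵍ⊗[ℚ] 𝒜),
      (∀ i, μA (a i) = 0) ∧ ((List.finRange p).map a).prod ≠ 0)
    (hB : ∃ b : Fin q → (ℬ ᵍ⊗[ℚ] ℬ),
      (∀ i, μB (b i) = 0) ∧ ((List.finRange q).map b).prod ≠ 0) :
    ∃ c : Fin (p + q) → (𝒞 ᵍ⊗[ℚ] 𝒞),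
      (∀ i, μC (c i) = 0) ∧ ((List.finRange (p + q)).map c).prod ≠ 0 := by
  obtain ⟨a, ha, ha_prod⟩ := hA
  obtain ⟨b, hb, hb_prod⟩ := hB
  set f := map _ _ (includeLeft_mem h𝒞) (includeLeft_mem h𝒞)
  set g := map _ _ (includeRight_mem h𝒞) (includeRight_mem h𝒞)
  refine ⟨Fin.append (f ∘ a) (g ∘ b),
    Fin.addCases (fun i => ?left_mem_ker) (fun j => ?right_mem_ker), ?prod_ne_zero⟩
  case left_mem_ker =>
    rw [Fin.append_left, Function.comp_apply, ← AlgHom.comp_apply,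
      comp_map_of_tmul_eq_mul _ _ μA hμA μC hμC, AlgHom.comp_apply, ha, map_zero]
  case right_mem_ker =>
    rw [Fin.append_right, Function.comp_apply, ← AlgHom.comp_apply,
      comp_map_of_tmul_eq_mul _ _ μB hμB μC hμC, AlgHom.comp_apply, hb, map_zero]
  case prod_ne_zero =>
    rw [List.prod_map_finRange_append, ← List.map_map, ← map_list_prod, ← List.map_map,
      ← map_list_prod, map_includeLeft_mul_map_includeRight h𝒞]
    simpa using TensorProduct.tmul_ne_zero ((of ℚ 𝒜 𝒜).symm.map_ne_zero_iff.mpr ha_prod)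
      ((of ℚ ℬ ℬ).symm.map_ne_zero_iff.mpr hb_prod)
end
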